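/- A finite Abelian group G has the semi-Hajós property if and only if G, regarded as a G-space under the regular action, has the semi-Hajós property as a G-space. -/

import Mathlib

open Pointwise

universe u

/-- `G = AB` is a factorization of the group `G`. -/
def IsFactorization {G : Type u} [Group G] (A B : Set G) : Prop :=
  Function.Bijective (fun p : A × B => (p.1 : G) * (p.2 : G))

/-- `A ⊆ G` is periodic: `gA = A` for some non-identity `g ∈ G`. -/
def IsPeriodic {G : Type u} [Group G] (A : Set G) : Prop :=
  ∃ g : G, g ≠ 1 ∧ g • A = A

/-- An Abelian group `G` has the semi-Hajós property if every complemented proper subset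
`A ⊊ G` either is periodic or has a periodic complementer factor. -/
def SemiHajosGroup (G : Type u) [Group G] : Prop :=
  ∀ A : Set G, A ≠ Set.univ → (∃ B : Set G, IsFactorization A B) →
    (IsPeriodic A ∨ ∃ B : Set G, IsFactorization A B ∧ IsPeriodic B)

/-- `K` is a kaleidoscopical configuration in the group `G` with the regular action. -/
def IsKaleidoscopical {G : Type u} [Group G] (K : Set G) : Prop :=
  ∃ (C : Type u) (χ : G → C), Function.Surjective χ ∧
    ∀ g : G, Set.BijOn χ (g • K) Set.univ

/-- The group `G`, as a `G`-space under the regular action, has the semi-Hajós property: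
for each kaleidoscopical configuration `K ⊊ G` there is a `G`-invariant equivalence
relation `E ≠ Δ_G` such that `K` is `E`-parallel (`K ∩ [x]_E = [x]_E` for `x ∈ K`) or
`E`-orthogonal (`K ∩ [x]_E = {x}` for `x ∈ K`) and `K/E` is kaleidoscopical in the
quotient `G`-space `G/E`. -/
def SemiHajosSpace (G : Type u) [Group G] : Prop :=
  ∀ K : Set G, K ≠ Set.univ → IsKaleidoscopical K →
    ∃ E : Setoid G, E ≠ ⊥ ∧ (∀ g x y : G, E.r x y → E.r (g * x) (g * y)) ∧
      ((∀ x ∈ K, K ∩ {y | E.r x y} = {y | E.r x y}) ∨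
       (∀ x ∈ K, K ∩ {y | E.r x y} = {x})) ∧
      ∃ (C : Type u) (χ : Quotient E → C), Function.Surjective χ ∧
        ∀ g : G, Set.BijOn χ (Quotient.mk E '' (g • K)) Set.univ

/-!
In a commutative group, `K` is kaleidoscopical exactly when `K⁻¹` is complemented: a colour
class of a kaleidoscopical colouring is a complementer factor of `K⁻¹`, and conversely `G = K⁻¹B`
yields the colouring of `g` by its `K⁻¹`-component. A `G`-invariant equivalence relation on the
regular `G`-space is the left coset relation of a subgroup `H`; then `K` is parallel iff `H`
stabilizes `K`, and orthogonal iff `K` meets every coset of `H` at most once. Now if `K⁻¹` is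
periodic, `K` is parallel to the cosets of its stabilizer and the factorization descends to
`G ⧸ H`; if `K⁻¹` has a periodic complementer factor `B`, then `K` is orthogonal to the cosets of
the stabilizer of `B`, and again the factorization descends. Conversely, an orthogonal `K` with
`K/H` kaleidoscopical lifts a complementer factor of `K⁻¹ / H` to an `H`-periodic one of `K⁻¹`.
-/

section Group

variable {G : Type u} [Group G] {A B K : Set G} {H : Subgroup G}

open MulAction

theorem isFactorization_iff :
    IsFactorization A B ↔ (∀ g, ∃ a ∈ A, ∃ b ∈ B, a * b = g) ∧
      ∀ a₁ ∈ A, ∀ a₂ ∈ A, ∀ b₁ ∈ B, ∀ b₂ ∈ B, a₁ * b₁ = a₂ * b₂ → a₁ = a₂ := by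
  constructor
  · rintro ⟨hinj, hsurj⟩
    refine ⟨fun g => ?_, fun a₁ ha₁ a₂ ha₂ b₁ hb₁ b₂ hb₂ h => ?_⟩
    · obtain ⟨⟨a, b⟩, rfl⟩ := hsurj g
      exact ⟨a, a.2, b, b.2, rfl⟩
    · exact congrArg (fun p : A × B => (p.1 : G))
        (hinj (a₁ := (⟨a₁, ha₁⟩, ⟨b₁, hb₁⟩)) (a₂ := (⟨a₂, ha₂⟩, ⟨b₂, hb₂⟩)) h)
  · rintro ⟨hsurj, hinj⟩
    refine ⟨?_, fun g => ?_⟩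
    · rintro ⟨⟨a₁, ha₁⟩, ⟨b₁, hb₁⟩⟩ ⟨⟨a₂, ha₂⟩, ⟨b₂, hb₂⟩⟩ (h : a₁ * b₁ = a₂ * b₂)
      obtain rfl := hinj a₁ ha₁ a₂ ha₂ b₁ hb₁ b₂ hb₂ h
      obtain rfl := mul_left_cancel h
      rfl
    · obtain ⟨a, ha, b, hb, rfl⟩ := hsurj g
      exact ⟨(⟨a, ha⟩, ⟨b, hb⟩), rfl⟩

theorem IsFactorization.exists_mul_eq (h : IsFactorization A B) (g : G) :
    ∃ a ∈ A, ∃ b ∈ B, a * b = g :=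
  (isFactorization_iff.1 h).1 g

theorem IsFactorization.eq_of_mul_eq (h : IsFactorization A B) {a₁ a₂ b₁ b₂ : G}
    (ha₁ : a₁ ∈ A) (ha₂ : a₂ ∈ A) (hb₁ : b₁ ∈ B) (hb₂ : b₂ ∈ B) (hab : a₁ * b₁ = a₂ * b₂) :
    a₁ = a₂ :=
  (isFactorization_iff.1 h).2 a₁ ha₁ a₂ ha₂ b₁ hb₁ b₂ hb₂ hab

-- `IsFactorization A B` is by definition Mathlib's `Subgroup.IsComplement A B`.
theorem IsFactorization.nonempty_right (h : IsFactorization A B) : B.Nonempty :=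
  Subgroup.IsComplement.nonempty_right h

theorem isPeriodic_iff_stabilizer_ne_bot : IsPeriodic A ↔ stabilizer G A ≠ ⊥ := by
  rw [Subgroup.ne_bot_iff_exists_ne_one]
  constructor
  · rintro ⟨g, hg, hgA⟩
    exact ⟨⟨g, hgA⟩, fun h => hg (congrArg Subtype.val h)⟩
  · rintro ⟨⟨g, hgA⟩, hg⟩
    exact ⟨g, fun h => hg (Subtype.ext h), hgA⟩

theorem IsPeriodic.of_le_stabilizer (hH : H ≠ ⊥) (hle : H ≤ stabilizer G A) : IsPeriodic A :=
  isPeriodic_iff_stabilizer_ne_bot.2 (ne_bot_of_le_ne_bot hH hle)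

theorem IsFactorization.injOn_mk (h : IsFactorization A B)
    (hB : H ≤ stabilizer G B) : Set.InjOn (QuotientGroup.mk : G → G ⧸ H) A := by
  intro a₁ ha₁ a₂ ha₂ ha
  obtain ⟨b, hb⟩ := h.nonempty_right
  have hs : a₁⁻¹ * a₂ ∈ H := QuotientGroup.eq.1 ha
  have hsb : a₁⁻¹ * a₂ * b ∈ B :=
    (le_stabilizer_iff_smul_le B H).1 hB _ hs (Set.smul_mem_smul_set hb)
  exact h.eq_of_mul_eq ha₁ ha₂ hsb hb (by rw [mul_assoc, mul_inv_cancel_left])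

theorem exists_eq_leftRel (E : Setoid G) (hE : ∀ g x y : G, E.r x y → E.r (g * x) (g * y)) :
    ∃ H : Subgroup G, E = QuotientGroup.leftRel H := by
  refine ⟨{ carrier := {x | E.r 1 x}
            one_mem' := E.refl 1
            mul_mem' := fun {a b} ha hb => E.trans ha (by simpa using hE a 1 b hb)
            inv_mem' := fun {a} ha => E.symm (by simpa using hE a⁻¹ 1 a ha) },
    Setoid.ext fun x y => ?_⟩
  rw [QuotientGroup.leftRel_apply]
  exact ⟨fun h => by simpa using hE x⁻¹ x y h, fun h => by simpa using hE x 1 _ h⟩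

theorem leftRel_eq_bot_iff : QuotientGroup.leftRel H = ⊥ ↔ H = ⊥ := by
  simp only [Setoid.ext_iff, Setoid.bot_def, QuotientGroup.leftRel_apply,
    Subgroup.eq_bot_iff_forall]
  exact ⟨fun h x hx => (h 1 x).1 (by simpa using hx) |>.symm,
    fun h x y => ⟨fun hxy => inv_mul_eq_one.1 (h _ hxy), fun hxy => by simp [hxy]⟩⟩

theorem leftRel_mul_left (g : G) {x y : G} (h : (QuotientGroup.leftRel H).r x y) :
    (QuotientGroup.leftRel H).r (g * x) (g * y) := by
  rw [QuotientGroup.leftRel_apply] at h ⊢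
  rwa [mul_inv_rev, mul_assoc, inv_mul_cancel_left]

theorem forall_inter_leftRel_eq_singleton_iff :
    (∀ x ∈ K, K ∩ {y | (QuotientGroup.leftRel H).r x y} = {x}) ↔
      Set.InjOn (QuotientGroup.mk : G → G ⧸ H) K := by
  constructor
  · intro hK x hx y hy hxy
    have hy' : y ∈ K ∩ {y | (QuotientGroup.leftRel H).r x y} := ⟨hy, Quotient.exact hxy⟩
    rw [hK x hx] at hy'
    exact hy'.symm
  · intro hK x hx
    ext y
    refine ⟨fun ⟨hy, hxy⟩ => (hK hx hy (Quotient.sound hxy)).symm, ?_⟩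
    rintro rfl
    exact ⟨hx, (QuotientGroup.leftRel H).refl _⟩

variable [H.Normal]

theorem le_stabilizer_preimage_mk (Bq : Set (G ⧸ H)) :
    H ≤ stabilizer G (QuotientGroup.mk ⁻¹' Bq) := by
  refine (le_stabilizer_iff_smul_le _ H).2 fun s hs => ?_
  rintro _ ⟨z, hz, rfl⟩
  change ((s * z : G) : G ⧸ H) ∈ Bq
  rwa [QuotientGroup.mk_mul, (QuotientGroup.eq_one_iff s).2 hs, one_mul]

theorem IsFactorization.of_image_mk {Bq : Set (G ⧸ H)}
    (hA : Set.InjOn (QuotientGroup.mk : G → G ⧸ H) A)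
    (h : IsFactorization (QuotientGroup.mk '' A) Bq) :
    IsFactorization A (QuotientGroup.mk ⁻¹' Bq) := by
  refine isFactorization_iff.2 ⟨fun g => ?_, fun a₁ ha₁ a₂ ha₂ b₁ hb₁ b₂ hb₂ hab => ?_⟩
  · obtain ⟨-, ⟨a, ha, rfl⟩, q, hq, haq⟩ := h.exists_mul_eq (g : G ⧸ H)
    refine ⟨a, ha, a⁻¹ * g, ?_, mul_inv_cancel_left a g⟩
    change ((a⁻¹ * g : G) : G ⧸ H) ∈ Bq
    rwa [QuotientGroup.mk_mul, QuotientGroup.mk_inv, ← haq, inv_mul_cancel_left]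
  · refine hA ha₁ ha₂ (h.eq_of_mul_eq ⟨a₁, ha₁, rfl⟩ ⟨a₂, ha₂, rfl⟩ hb₁ hb₂ ?_)
    rw [← QuotientGroup.mk_mul, ← QuotientGroup.mk_mul, hab]

theorem injOn_mk_inv_iff :
    Set.InjOn (QuotientGroup.mk : G → G ⧸ H) K⁻¹ ↔
      Set.InjOn (QuotientGroup.mk : G → G ⧸ H) K := by
  suffices ∀ S : Set G, Set.InjOn (QuotientGroup.mk : G → G ⧸ H) S →
      Set.InjOn (QuotientGroup.mk : G → G ⧸ H) S⁻¹ from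
    ⟨fun h => inv_inv K ▸ this _ h, this K⟩
  intro S hS x hx y hy hxy
  refine inv_injective (hS hx hy ?_)
  rw [QuotientGroup.mk_inv, QuotientGroup.mk_inv, hxy]

theorem image_mk_inv (S : Set G) :
    (QuotientGroup.mk '' S⁻¹ : Set (G ⧸ H)) = (QuotientGroup.mk '' S)⁻¹ :=
  Set.image_inv (QuotientGroup.mk' H) S

theorem exists_coloring_quotient_leftRel_iff :
    (∃ (C : Type u) (χ : Quotient (QuotientGroup.leftRel H) → C), Function.Surjective χ ∧
        ∀ g : G, Set.BijOn χ (Quotient.mk (QuotientGroup.leftRel H) '' (g • K)) Set.univ) ↔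
      IsKaleidoscopical (QuotientGroup.mk '' K : Set (G ⧸ H)) := by
  -- `Quotient (leftRel H)` is `G ⧸ H` by definition.
  have himage : ∀ g : G, Quotient.mk (QuotientGroup.leftRel H) '' (g • K) =
      (g : G ⧸ H) • (QuotientGroup.mk '' K : Set (G ⧸ H)) :=
    fun g => Set.image_smul_distrib (QuotientGroup.mk' H) g K
  simp only [himage]
  refine exists_congr fun C => exists_congr fun χ => and_congr_right fun _ => ?_
  exact ⟨fun h q => QuotientGroup.induction_on q h, fun h g => h g⟩

end Group

section CommGroup

variable {G : Type u} [CommGroup G] {A B K : Set G} {H : Subgroup G}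

open MulAction

theorem IsFactorization.symm (h : IsFactorization A B) : IsFactorization B A := by
  have hswap : (fun p : B × A => (p.1 : G) * p.2) =
      (fun p : A × B => (p.1 : G) * p.2) ∘ Prod.swap := by
    funext p
    exact mul_comm _ _
  unfold IsFactorization
  rw [hswap]
  exact Function.Bijective.comp h (Equiv.prodComm B A).bijective

theorem IsKaleidoscopical.exists_isFactorization (hK : IsKaleidoscopical K) :
    ∃ B : Set G, IsFactorization K⁻¹ B := by
  obtain ⟨C, χ, -, hχ⟩ := hK
  refine ⟨χ ⁻¹' {χ 1}, isFactorization_iff.2 ⟨fun g => ?_, ?_⟩⟩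
  · obtain ⟨-, ⟨k, hk, rfl⟩, hgk⟩ := (hχ g).surjOn (Set.mem_univ (χ 1))
    exact ⟨k⁻¹, by simpa using hk, g • k, hgk, by simp [mul_comm g k]⟩
  · intro a₁ ha₁ a₂ ha₂ b₁ hb₁ b₂ hb₂ hab
    have hmem : ∀ a ∈ K⁻¹, ∀ b, b ∈ (a * b) • K := fun a ha b =>
      ⟨a⁻¹, ha, by simp [mul_comm a b]⟩
    have hb : b₁ = b₂ :=
      (hχ (a₁ * b₁)).injOn (hmem a₁ ha₁ b₁) (hab ▸ hmem a₂ ha₂ b₂) (hb₁.trans hb₂.symm)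
    subst hb
    exact mul_right_cancel hab

theorem IsFactorization.isKaleidoscopical_inv (h : IsFactorization A B) :
    IsKaleidoscopical A⁻¹ := by
  let e : G ≃ A × B := Subgroup.IsComplement.equiv h
  have he : ∀ a ∈ A, ∀ b ∈ B, (e (a * b)).1 = a := fun a ha b hb => by
    rw [show a * b = e.symm (⟨a, ha⟩, ⟨b, hb⟩) from rfl, e.apply_symm_apply]
  have hmul : ∀ g, ((e g).1 : G) * (e g).2 = g := Subgroup.IsComplement.equiv_fst_mul_equiv_snd h
  refine ⟨A, fun g => (e g).1, fun a => ?_, fun g => ⟨fun _ _ => trivial, ?_, fun a _ => ?_⟩⟩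
  · obtain ⟨b, hb⟩ := h.nonempty_right
    exact ⟨a * b, Subtype.ext (he a a.2 b hb)⟩
  · rintro - ⟨k₁, hk₁, rfl⟩ - ⟨k₂, hk₂, rfl⟩ (hk : (e (g * k₁)).1 = (e (g * k₂)).1)
    have hk₁' : k₁⁻¹ ∈ A := Set.mem_inv.1 hk₁
    have hk₂' : k₂⁻¹ ∈ A := Set.mem_inv.1 hk₂
    have hkey : k₁⁻¹ * (e (g * k₁)).2 = k₂⁻¹ * (e (g * k₂)).2 := by
      have h₁ := hmul (g * k₁)
      have h₂ := hmul (g * k₂)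
      rw [hk] at h₁
      rw [← inv_mul_eq_iff_eq_mul.2 h₁.symm, ← inv_mul_eq_iff_eq_mul.2 h₂.symm]
      simp only [mul_comm, mul_left_comm]
      group
    simp [inv_injective (h.eq_of_mul_eq hk₁' hk₂' (e (g * k₁)).2.2 (e (g * k₂)).2.2 hkey)]
  · obtain ⟨a', ha', b', hb', hab'⟩ := h.exists_mul_eq ((a : G)⁻¹ * g)
    refine ⟨a * b', ⟨a'⁻¹, by simpa using ha', ?_⟩, Subtype.ext (he a a.2 b' hb')⟩
    change g * a'⁻¹ = a * b'
    rw [eq_inv_mul_iff_mul_eq.2 hab', mul_left_comm, mul_inv_cancel_left, mul_comm]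

theorem stabilizer_inv (A : Set G) : stabilizer G A⁻¹ = stabilizer G A := by
  suffices ∀ S : Set G, stabilizer G S⁻¹ ≤ stabilizer G S from
    le_antisymm (this A) (by simpa using this A⁻¹)
  intro S g hg
  have hg' : (g⁻¹ • S⁻¹)⁻¹ = S⁻¹⁻¹ := by rw [inv_smul_eq_iff.2 (mem_stabilizer_iff.1 hg).symm]
  rw [Set.inv_smul_set_distrib, op_smul_eq_smul, inv_inv, inv_inv] at hg'
  exact mem_stabilizer_iff.2 hg'

theorem isPeriodic_inv_iff : IsPeriodic A⁻¹ ↔ IsPeriodic A := by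
  rw [isPeriodic_iff_stabilizer_ne_bot, isPeriodic_iff_stabilizer_ne_bot, stabilizer_inv]

theorem IsFactorization.image_mk (h : IsFactorization A B) (hB : H ≤ stabilizer G B) :
    IsFactorization (QuotientGroup.mk '' A : Set (G ⧸ H)) (QuotientGroup.mk '' B) := by
  refine isFactorization_iff.2 ⟨fun q => ?_, ?_⟩
  · obtain ⟨g, rfl⟩ := QuotientGroup.mk_surjective q
    obtain ⟨a, ha, b, hb, rfl⟩ := h.exists_mul_eq g
    exact ⟨a, ⟨a, ha, rfl⟩, b, ⟨b, hb, rfl⟩, rfl⟩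
  · rintro - ⟨a₁, ha₁, rfl⟩ - ⟨a₂, ha₂, rfl⟩ - ⟨b₁, hb₁, rfl⟩ - ⟨b₂, hb₂, rfl⟩ hab
    rw [← QuotientGroup.mk_mul, ← QuotientGroup.mk_mul, QuotientGroup.eq] at hab
    set s := (a₁ * b₁)⁻¹ * (a₂ * b₂)
    have hsb : s * b₁ ∈ B :=
      (le_stabilizer_iff_smul_le B H).1 hB s hab (Set.smul_mem_smul_set hb₁)
    have hmul : a₁ * (s * b₁) = a₂ * b₂ := by
      rw [mul_comm s b₁, ← mul_assoc, mul_inv_cancel_left]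
    rw [h.eq_of_mul_eq ha₁ ha₂ hsb hb₂ hmul]

theorem forall_inter_leftRel_eq_iff :
    (∀ x ∈ K, K ∩ {y | (QuotientGroup.leftRel H).r x y} = {y | (QuotientGroup.leftRel H).r x y})
      ↔ H ≤ stabilizer G K := by
  simp only [Set.inter_eq_right, le_stabilizer_iff_smul_le]
  constructor
  · rintro hK s hs _ ⟨x, hx, rfl⟩
    exact hK x hx (by simpa [QuotientGroup.leftRel_apply, mul_comm s x] using hs)
  · intro hK x hx y hxy
    have hs : x⁻¹ * y ∈ H := QuotientGroup.leftRel_apply.1 hxy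
    simpa using hK _ hs (Set.smul_mem_smul_set (a := x⁻¹ * y) hx)

theorem semiHajosSpace_iff : SemiHajosSpace G ↔
    ∀ K : Set G, K ≠ Set.univ → IsKaleidoscopical K → ∃ H : Subgroup G, H ≠ ⊥ ∧
      (H ≤ stabilizer G K ∨ Set.InjOn (QuotientGroup.mk : G → G ⧸ H) K) ∧
      IsKaleidoscopical (QuotientGroup.mk '' K : Set (G ⧸ H)) := by
  refine forall_congr' fun K => imp_congr_right fun _ => imp_congr_right fun _ => ⟨?_, ?_⟩
  · rintro ⟨E, hE, hinv, hpo, hcol⟩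
    obtain ⟨H, rfl⟩ := exists_eq_leftRel E hinv
    exact ⟨H, mt leftRel_eq_bot_iff.2 hE,
      hpo.imp forall_inter_leftRel_eq_iff.1 forall_inter_leftRel_eq_singleton_iff.1,
      exists_coloring_quotient_leftRel_iff.1 hcol⟩
  · rintro ⟨H, hH, hpo, hkal⟩
    exact ⟨QuotientGroup.leftRel H, mt leftRel_eq_bot_iff.1 hH, fun g _ _ => leftRel_mul_left g,
      hpo.imp forall_inter_leftRel_eq_iff.2 forall_inter_leftRel_eq_singleton_iff.2,
      exists_coloring_quotient_leftRel_iff.2 hkal⟩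

end CommGroup

theorem stmt16_general (G : Type u) [CommGroup G] :
    SemiHajosGroup G ↔ SemiHajosSpace G := by
  rw [semiHajosSpace_iff]
  constructor
  · intro hG K hK hKal
    obtain ⟨B, hKB⟩ := hKal.exists_isFactorization
    rcases hG K⁻¹ (by rwa [Ne, ← Set.inv_univ, inv_inj]) ⟨B, hKB⟩ with hper | ⟨B', hKB', hper'⟩
    · have hstab : MulAction.stabilizer G K ≤ MulAction.stabilizer G K⁻¹ := (stabilizer_inv K).ge
      refine ⟨_, isPeriodic_iff_stabilizer_ne_bot.1 (isPeriodic_inv_iff.1 hper), Or.inl le_rfl, ?_⟩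
      simpa only [← image_mk_inv, inv_inv] using
        (hKB.symm.image_mk hstab).symm.isKaleidoscopical_inv
    · refine ⟨_, isPeriodic_iff_stabilizer_ne_bot.1 hper',
        Or.inr (injOn_mk_inv_iff.1 (hKB'.injOn_mk le_rfl)), ?_⟩
      simpa only [← image_mk_inv, inv_inv] using (hKB'.image_mk le_rfl).isKaleidoscopical_inv
  · rintro hS A hA ⟨B, hAB⟩
    obtain ⟨H, hH, hpar | horth, hkal⟩ :=
      hS A⁻¹ (by rwa [Ne, ← Set.inv_univ, inv_inj]) hAB.isKaleidoscopical_inv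
    · exact Or.inl (isPeriodic_inv_iff.1 (IsPeriodic.of_le_stabilizer hH hpar))
    · obtain ⟨Bq, hBq⟩ := hkal.exists_isFactorization
      rw [← image_mk_inv, inv_inv] at hBq
      exact Or.inr ⟨_, hBq.of_image_mk (injOn_mk_inv_iff.1 horth),
        IsPeriodic.of_le_stabilizer hH (le_stabilizer_preimage_mk Bq)⟩

/-- A finite Abelian group `G` has the semi-Hajós property if and only if
`G`, regarded as a `G`-space under the regular action, has the semi-Hajós property as a
`G`-space. -/
theorem stmt16 (G : Type u) [CommGroup G] [Finite G] :
    SemiHajosGroup G ↔ SemiHajosSpace G :=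
  stmt16_general G
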